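/- For every ρ > 0, the function g_ρ(x₂) = F(x₂ tan θ)^ρ satisfies the closed-form evaluation R(g_ρ) = α^{-2ρ} · tan θ · (ρ − cot²θ) · (2^{2ρ} − 1) / (2ρ + 1). In particular, for ρ = cos²θ one has R(g_{cos²θ}) = −α^{-2cos²θ} · cos³θ (2^{2cos²θ} − 1) / ( sin θ (1 + 2cos²θ) ). -/

import Mathlib

/-! With `t = tan θ` and `u = x t`, the integrand of `R(g_ρ)` is
`(ρ²t² − ρ) F(u)^(2ρ−1) F'(u)²`, so `R(g_ρ) = (ρ²t − ρ/t) ∫ F^(2ρ−1) F'²`.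
Since `F' = αF` on `(−∞, 0]` and `F' = 2 − αF` on `[0, ∞)`, this last integrand is the
derivative of `αF^(2ρ+1)/(2ρ+1)` on the left half-line and of
`F^(2ρ)/ρ − αF^(2ρ+1)/(2ρ+1)` on the right one, while `F` increases from `0` through
`F 0 = 1/α` to `2/α`. -/

open Real MeasureTheory Set Filter

/-- `F α t = ∫_{-∞}^t e^{-α|x|} dx`. -/
noncomputable def F (α t : ℝ) : ℝ := ∫ x in Iio t, exp (-α * |x|)

/-- The half-plane-like domain `Ω = {(x₁,x₂) : x₁ < x₂ tan θ}`. -/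
def Omg (θ : ℝ) : Set (ℝ × ℝ) := {p | p.1 < p.2 * tan θ}

/-- The functional `R(g) = ∫ g'·(g'·F(x tanθ) − g·e^{-α|x|tanθ}·cot θ) dx`. -/
noncomputable def Rfun (α θ : ℝ) (g : ℝ → ℝ) : ℝ :=
  ∫ x : ℝ, deriv g x *
    (deriv g x * F α (x * tan θ) - g x * exp (-α * |x| * tan θ) * cot θ)

/-- The quantity `Λ(θ)` from the upper bound for the lowest eigenvalue. -/
noncomputable def Lam (θ : ℝ) : ℝ :=
  3 * cos θ ^ 6 * ((2:ℝ) ^ (2 * cos θ ^ 2) - 1) ^ 2 /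
    (2 * (1 + 2 * cos θ ^ 2) ^ 3 *
      (108 + 180 * cos θ ^ 2 - 132 * cos θ ^ 4 + 45 * cos θ ^ 6 - 5 * cos θ ^ 8))

open Topology

theorem integrableOn_Iic_deriv_of_nonneg' {g g' : ℝ → ℝ} {a l : ℝ}
    (hderiv : ∀ x ∈ Iic a, HasDerivAt g (g' x) x) (g'pos : ∀ x ∈ Iio a, 0 ≤ g' x)
    (hg : Tendsto g atBot (𝓝 l)) : IntegrableOn g' (Iic a) := by
  have hreflect : IntegrableOn (fun x => -g' (-x)) (Ioi (-a)) := by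
    refine integrableOn_Ioi_deriv_of_nonpos' (g := fun x => g (-x)) (fun x hx => ?_)
      (fun x hx => neg_nonpos.mpr (g'pos _ (show -x < a from neg_lt.mp hx)))
      (hg.comp tendsto_neg_atTop_atBot)
    have h := (hderiv (-x) (show -x ≤ a from neg_le.mp hx)).comp x (hasDerivAt_neg x)
    rwa [mul_neg_one] at h
  rw [integrableOn_Iic_iff_integrableOn_Iio]
  simpa using hreflect.neg.comp_neg_Iio (c := a)

theorem integrable_exp_neg_mul_abs {b : ℝ} (hb : 0 < b) :
    Integrable (fun x : ℝ => exp (-b * |x|)) := by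
  rw [← integrableOn_univ, ← Iic_union_Ioi (a := (0 : ℝ))]
  refine IntegrableOn.union ?_ ?_
  · refine (integrableOn_exp_mul_Iic hb 0).congr_fun (fun x hx => ?_) measurableSet_Iic
    rw [abs_of_nonpos hx, neg_mul_neg]
  · refine (integrableOn_exp_mul_Ioi (neg_lt_zero.mpr hb) 0).congr_fun (fun x hx => ?_)
      measurableSet_Ioi
    rw [abs_of_pos hx]

section

variable {α ρ : ℝ}

theorem F_of_nonpos (hα : 0 < α) {t : ℝ} (ht : t ≤ 0) : F α t = exp (α * t) / α := by
  rw [F, ← integral_exp_mul_Iic hα, integral_Iic_eq_integral_Iio]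
  refine setIntegral_congr_fun measurableSet_Iio fun x hx => ?_
  rw [abs_of_nonpos (le_of_lt (lt_of_lt_of_le hx ht)), neg_mul_neg]

theorem integral_Ici_exp_neg_mul_abs (hα : 0 < α) {t : ℝ} (ht : 0 ≤ t) :
    ∫ x in Ici t, exp (-α * |x|) = exp (-(α * t)) / α := by
  rw [integral_Ici_eq_integral_Ioi, setIntegral_congr_fun measurableSet_Ioi
    (g := fun x => exp (-α * x)) fun x hx => by rw [abs_of_pos (ht.trans_lt hx)],
    integral_exp_mul_Ioi (neg_lt_zero.mpr hα)]
  ring_nf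

theorem F_of_nonneg (hα : 0 < α) {t : ℝ} (ht : 0 ≤ t) :
    F α t = (2 - exp (-(α * t))) / α := by
  have hint := integrable_exp_neg_mul_abs hα
  have hsplit (s : ℝ) : F α s + ∫ x in Ici s, exp (-α * |x|) = ∫ x, exp (-α * |x|) :=
    intervalIntegral.integral_Iio_add_Ici hint.integrableOn hint.integrableOn
  have h := (hsplit t).trans (hsplit 0).symm
  rw [integral_Ici_exp_neg_mul_abs hα ht, integral_Ici_exp_neg_mul_abs hα le_rfl,
    F_of_nonpos hα le_rfl] at h
  simp only [mul_zero, neg_zero, exp_zero] at h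
  linear_combination h

theorem F_pos (hα : 0 < α) (t : ℝ) : 0 < F α t := by
  rcases le_total t 0 with ht | ht
  · rw [F_of_nonpos hα ht]; positivity
  · have : exp (-(α * t)) ≤ 1 := exp_le_one_iff.mpr (by nlinarith)
    rw [F_of_nonneg hα ht]
    exact div_pos (by linarith) hα

theorem exp_neg_mul_abs_of_nonpos (hα : 0 < α) {t : ℝ} (ht : t ≤ 0) :
    exp (-α * |t|) = α * F α t := by
  rw [F_of_nonpos hα ht, mul_div_cancel₀ _ hα.ne', abs_of_nonpos ht, neg_mul_neg]

theorem exp_neg_mul_abs_of_nonneg (hα : 0 < α) {t : ℝ} (ht : 0 ≤ t) :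
    exp (-α * |t|) = 2 - α * F α t := by
  rw [F_of_nonneg hα ht, mul_div_cancel₀ _ hα.ne', abs_of_nonneg ht, neg_mul]
  ring

theorem tendsto_F_atBot (hα : 0 < α) : Tendsto (F α) atBot (𝓝 0) := by
  have h : Tendsto (fun t => exp (α * t) / α) atBot (𝓝 (0 / α)) :=
    (tendsto_exp_atBot.comp (tendsto_id.const_mul_atBot hα)).div_const α
  rw [zero_div] at h
  exact h.congr' (eventually_le_atBot 0 |>.mono fun t ht => (F_of_nonpos hα ht).symm)

theorem tendsto_F_atTop (hα : 0 < α) : Tendsto (F α) atTop (𝓝 (2 / α)) := by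
  have hlin : Tendsto (fun t => -(α * t)) atTop atBot :=
    tendsto_neg_atTop_atBot.comp (tendsto_id.const_mul_atTop hα)
  have h : Tendsto (fun t => (2 - exp (-(α * t))) / α) atTop (𝓝 ((2 - 0) / α)) :=
    ((tendsto_exp_atBot.comp hlin).const_sub 2).div_const α
  rw [sub_zero] at h
  exact h.congr' (eventually_ge_atTop 0 |>.mono fun t ht => (F_of_nonneg hα ht).symm)

theorem hasDerivAt_F (hα : 0 < α) (t : ℝ) : HasDerivAt (F α) (exp (-α * |t|)) t := by
  have hint := integrable_exp_neg_mul_abs hα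
  have hF : F α = fun u => F α 0 + ∫ x in (0 : ℝ)..u, exp (-α * |x|) := by
    funext u
    rw [F, F, ← integral_Iic_eq_integral_Iio, ← integral_Iic_eq_integral_Iio,
      ← intervalIntegral.integral_Iic_sub_Iic hint.integrableOn hint.integrableOn]
    ring
  rw [hF]
  exact (intervalIntegral.integral_hasDerivAt_right hint.intervalIntegrable
    ((by fun_prop : Continuous fun x : ℝ => exp (-α * |x|)).stronglyMeasurableAtFilter _ _)
    (by fun_prop)).const_add _

theorem hasDerivAt_F_rpow (hα : 0 < α) (p t : ℝ) :
    HasDerivAt (fun u => F α u ^ p) (p * F α t ^ (p - 1) * exp (-α * |t|)) t := by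
  convert (hasDerivAt_F hα t).rpow_const (p := p) (Or.inl (F_pos hα t).ne') using 1
  ring

theorem hasDerivAt_F_rpow_primitive_of_nonpos (hα : 0 < α) (hρ : 2 * ρ + 1 ≠ 0) {u : ℝ}
    (hu : u ≤ 0) :
    HasDerivAt (fun u => α * F α u ^ (2 * ρ + 1) / (2 * ρ + 1))
      (F α u ^ (2 * ρ - 1) * exp (-α * |u|) ^ 2) u := by
  refine (((hasDerivAt_F_rpow hα _ u).const_mul α).div_const _).congr_deriv ?_
  rw [add_sub_cancel_right, sq, exp_neg_mul_abs_of_nonpos hα hu,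
    Real.rpow_sub_one (F_pos hα u).ne']
  field_simp

theorem hasDerivAt_F_rpow_primitive_of_nonneg (hα : 0 < α) (hρ : 2 * ρ + 1 ≠ 0)
    (hρ₀ : ρ ≠ 0) {u : ℝ} (hu : 0 ≤ u) :
    HasDerivAt (fun u => F α u ^ (2 * ρ) / ρ - α * F α u ^ (2 * ρ + 1) / (2 * ρ + 1))
      (F α u ^ (2 * ρ - 1) * exp (-α * |u|) ^ 2) u := by
  refine (((hasDerivAt_F_rpow hα _ u).div_const ρ).sub
    (((hasDerivAt_F_rpow hα _ u).const_mul α).div_const _)).congr_deriv ?_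
  rw [add_sub_cancel_right, sq]
  nth_rewrite 3 [exp_neg_mul_abs_of_nonneg hα hu]
  have hF := (F_pos hα u).ne'
  rw [Real.rpow_sub_one hF]
  field_simp

theorem integral_F_rpow_mul_exp_sq (hα : 0 < α) (hρ : 0 < 2 * ρ + 1) (hρ₀ : ρ ≠ 0) :
    ∫ u, F α u ^ (2 * ρ - 1) * exp (-α * |u|) ^ 2
      = α ^ (-(2 * ρ)) * ((2 : ℝ) ^ (2 * ρ) - 1) / (ρ * (2 * ρ + 1)) := by
  have hnonneg (u : ℝ) : 0 ≤ F α u ^ (2 * ρ - 1) * exp (-α * |u|) ^ 2 := by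
    have := F_pos hα u; positivity
  have hderiv₁ (u) (hu : u ∈ Iic (0 : ℝ)) :=
    hasDerivAt_F_rpow_primitive_of_nonpos hα hρ.ne' hu
  have hderiv₂ (u) (hu : u ∈ Ici (0 : ℝ)) :=
    hasDerivAt_F_rpow_primitive_of_nonneg hα hρ.ne' hρ₀ hu
  have hlim₁ : Tendsto (fun u => α * F α u ^ (2 * ρ + 1) / (2 * ρ + 1)) atBot (𝓝 0) := by
    simpa [Real.zero_rpow hρ.ne'] using
      (((tendsto_F_atBot hα).rpow_const (Or.inr hρ.le)).const_mul α).div_const (2 * ρ + 1)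
  have hF₂ (p : ℝ) := (tendsto_F_atTop hα).rpow_const (p := p) (Or.inl (by positivity))
  have hlim₂ :=
    ((hF₂ (2 * ρ)).div_const ρ).sub (((hF₂ (2 * ρ + 1)).const_mul α).div_const (2 * ρ + 1))
  have hint₁ := integrableOn_Iic_deriv_of_nonneg' hderiv₁ (fun u _ => hnonneg u) hlim₁
  rw [← intervalIntegral.integral_Iic_add_Ioi hint₁
      (integrableOn_Ioi_deriv_of_nonneg' hderiv₂ (fun u _ => hnonneg u) hlim₂),
    integral_Iic_of_hasDerivAt_of_tendsto' hderiv₁ hint₁ hlim₁,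
    integral_Ioi_of_hasDerivAt_of_nonneg' hderiv₂ (fun u _ => hnonneg u) hlim₂]
  simp only [F_of_nonpos hα le_rfl, mul_zero, exp_zero]
  rw [Real.rpow_add_one (by positivity), Real.rpow_add_one (by positivity),
    Real.div_rpow zero_le_one hα.le, Real.div_rpow zero_le_two hα.le, Real.one_rpow,
    Real.rpow_neg hα.le]
  field_simp
  ring

theorem hasDerivAt_F_comp_mul_rpow (hα : 0 < α) (p c x : ℝ) :
    HasDerivAt (fun x => F α (x * c) ^ p)
      (p * F α (x * c) ^ (p - 1) * exp (-α * |x * c|) * c) x := by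
  have h := (hasDerivAt_F_rpow hα p (x * c)).comp x ((hasDerivAt_id x).mul_const c)
  simpa only [Function.comp_def, id_eq, one_mul, mul_assoc] using h

theorem Rfun_F_mul_tan_rpow {θ : ℝ} (hα : 0 < α) (ht : 0 < tan θ) (hρ : 0 < 2 * ρ + 1)
    (hρ₀ : ρ ≠ 0) :
    Rfun α θ (fun x => F α (x * tan θ) ^ ρ)
      = α ^ (-(2 * ρ)) * tan θ * (ρ - cot θ ^ 2) * ((2 : ℝ) ^ (2 * ρ) - 1)
        / (2 * ρ + 1) := by
  have hcot : cot θ = (tan θ)⁻¹ := by rw [cot_eq_cos_div_sin, tan_eq_sin_div_cos, inv_div]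
  have hintegrand (x : ℝ) :
      deriv (fun x => F α (x * tan θ) ^ ρ) x * (deriv (fun x => F α (x * tan θ) ^ ρ) x
        * F α (x * tan θ) - F α (x * tan θ) ^ ρ * exp (-α * |x| * tan θ) * cot θ)
      = (ρ ^ 2 * tan θ ^ 2 - ρ) *
          (F α (x * tan θ) ^ (2 * ρ - 1) * exp (-α * |x * tan θ|) ^ 2) := by
    have hF := (F_pos hα (x * tan θ)).ne'
    rw [(hasDerivAt_F_comp_mul_rpow hα ρ _ x).deriv, abs_mul, abs_of_pos ht, hcot,
      Real.rpow_sub_one hF, Real.rpow_sub_one hF, two_mul, Real.rpow_add (F_pos hα _)]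
    field_simp
  rw [Rfun]
  simp_rw [hintegrand]
  rw [integral_const_mul, Measure.integral_comp_mul_right
      (fun u => F α u ^ (2 * ρ - 1) * exp (-α * |u|) ^ 2),
    integral_F_rpow_mul_exp_sq hα hρ hρ₀, abs_of_pos (inv_pos.mpr ht), smul_eq_mul, hcot]
  field_simp

end

/-- closed-form evaluation of `R(g_ρ)` for every `ρ > 0`, and its
value at `ρ = cos²θ`. -/
theorem R_of_g_rho_closed_form (α θ : ℝ) (hα : 0 < α) (hθ : θ ∈ Ioo 0 (π/2)) :
    (∀ ρ : ℝ, 0 < ρ →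
      Rfun α θ (fun x => F α (x * tan θ) ^ ρ)
        = α ^ (-(2 * ρ)) * tan θ * (ρ - cot θ ^ 2) * ((2:ℝ) ^ (2 * ρ) - 1) / (2 * ρ + 1))
    ∧ Rfun α θ (fun x => F α (x * tan θ) ^ (cos θ ^ 2))
        = -(α ^ (-(2 * cos θ ^ 2)) * cos θ ^ 3 * ((2:ℝ) ^ (2 * cos θ ^ 2) - 1)
            / (sin θ * (1 + 2 * cos θ ^ 2))) := by
  obtain ⟨hθ₀, hθ₁⟩ := hθ
  have ht : 0 < tan θ := tan_pos_of_pos_of_lt_pi_div_two hθ₀ hθ₁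
  have hsin : 0 < sin θ := sin_pos_of_pos_of_lt_pi hθ₀ (by linarith [pi_pos])
  have hcos : 0 < cos θ := cos_pos_of_mem_Ioo ⟨by linarith, hθ₁⟩
  have hR (ρ : ℝ) (hρ : 0 < ρ) := Rfun_F_mul_tan_rpow (ρ := ρ) hα ht (by linarith) hρ.ne'
  refine ⟨hR, ?_⟩
  have htan_mul : tan θ * (cos θ ^ 2 - cot θ ^ 2) = -(cos θ ^ 3 / sin θ) := by
    rw [tan_eq_sin_div_cos, cot_eq_cos_div_sin]
    field_simp
    linear_combination sin_sq_add_cos_sq θ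
  rw [hR _ (by positivity), mul_assoc (α ^ _), htan_mul]
  field_simp
  ring
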